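/- Over a field k of characteristic ≠ 2, 3, the quadratic map cr: P² ⇢ P², [u₀:u₁:u₂] ↦ [u₀² + 3u₁² - u₂² : u₀u₂ + u₂² : u₁u₂], is a Cremona transformation with inverse given by [v₀:v₁:v₂] ↦ [v₀v₁ + v₁² - 3v₂² : v₀v₂ + 2v₁v₂ : v₁² + 3v₂²]. -/

import Mathlib

/-!
Both compositions expand to a cubic multiple of the identity. For `crInvPoly ∘ crPoly` the cubic
`crCubic` is `-½` the Jacobian of `crPoly`, a line times a conic: the curves that `cr` contracts.
Each cubic takes the value `1` at some point, so it is nonzero in every characteristic.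
-/

open MvPolynomial

/-- The three quadrics defining the Cremona map
`cr : [u₀:u₁:u₂] ↦ [u₀² + 3u₁² - u₂² : u₀u₂ + u₂² : u₁u₂]`. -/
noncomputable def crPoly (k : Type) [Field k] : Fin 3 → MvPolynomial (Fin 3) k :=
  ![X 0 ^ 2 + 3 * X 1 ^ 2 - X 2 ^ 2, X 0 * X 2 + X 2 ^ 2, X 1 * X 2]

/-- The three quadrics defining the map
`[v₀:v₁:v₂] ↦ [v₀v₁ + v₁² - 3v₂² : v₀v₂ + 2v₁v₂ : v₁² + 3v₂²]`. -/
noncomputable def crInvPoly (k : Type) [Field k] : Fin 3 → MvPolynomial (Fin 3) k :=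
  ![X 0 * X 1 + X 1 ^ 2 - 3 * X 2 ^ 2, X 0 * X 2 + 2 * X 1 * X 2, X 1 ^ 2 + 3 * X 2 ^ 2]

section

variable (k : Type) [Field k]

noncomputable def crCubic : MvPolynomial (Fin 3) k :=
  X 2 * ((X 0 + X 2) ^ 2 + 3 * X 1 ^ 2)

noncomputable def crInvCubic : MvPolynomial (Fin 3) k :=
  (X 0 + 2 * X 1) * (X 1 ^ 2 + 3 * X 2 ^ 2)

theorem aeval_crPoly_crInvPoly (j : Fin 3) :
    aeval (crPoly k) (crInvPoly k j) = crCubic k * X j := by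
  fin_cases j <;>
    simp only [crPoly, crInvPoly, crCubic, map_add, map_sub, map_mul, map_pow, map_ofNat,
      aeval_X, Matrix.cons_val_zero, Matrix.cons_val_one, Matrix.cons_val_two, Matrix.head_cons,
      Matrix.tail_cons, Fin.zero_eta, Fin.mk_one, Fin.reduceFinMk] <;>
    ring

theorem aeval_crInvPoly_crPoly (j : Fin 3) :
    aeval (crInvPoly k) (crPoly k j) = crInvCubic k * X j := by
  fin_cases j <;>
    simp only [crPoly, crInvPoly, crInvCubic, map_add, map_sub, map_mul, map_pow, map_ofNat,
      aeval_X, Matrix.cons_val_zero, Matrix.cons_val_one, Matrix.cons_val_two, Matrix.head_cons,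
      Matrix.tail_cons, Fin.zero_eta, Fin.mk_one, Fin.reduceFinMk] <;>
    ring

theorem crCubic_ne_zero : crCubic k ≠ 0 :=
  ne_of_apply_ne (eval ![0, 0, 1]) (by simp [crCubic])

theorem crInvCubic_ne_zero : crInvCubic k ≠ 0 :=
  ne_of_apply_ne (eval ![-1, 1, 0]) (by norm_num [crInvCubic, Matrix.cons_val_two])

end

theorem cremona_quadratic_inverse_general (k : Type) [Field k] :
    (∃ c : MvPolynomial (Fin 3) k, c ≠ 0 ∧
      ∀ j : Fin 3, aeval (crPoly k) (crInvPoly k j) = c * X j) ∧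
    (∃ c' : MvPolynomial (Fin 3) k, c' ≠ 0 ∧
      ∀ j : Fin 3, aeval (crInvPoly k) (crPoly k j) = c' * X j) :=
  ⟨⟨crCubic k, crCubic_ne_zero k, aeval_crPoly_crInvPoly k⟩,
    ⟨crInvCubic k, crInvCubic_ne_zero k, aeval_crInvPoly_crPoly k⟩⟩

/-- Over a field `k` of characteristic `≠ 2, 3`, the quadratic map
`cr : P² ⇢ P²`, `[u₀:u₁:u₂] ↦ [u₀² + 3u₁² - u₂² : u₀u₂ + u₂² : u₁u₂]` is a Cremona
transformation with inverse `[v₀:v₁:v₂] ↦ [v₀v₁ + v₁² - 3v₂² : v₀v₂ + 2v₁v₂ : v₁² + 3v₂²]`: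
both compositions agree with the identity up to multiplication by a nonzero common
polynomial factor. -/
theorem cremona_quadratic_inverse (k : Type) [Field k]
    (h2 : ringChar k ≠ 2) (h3 : ringChar k ≠ 3) :
    (∃ c : MvPolynomial (Fin 3) k, c ≠ 0 ∧
      ∀ j : Fin 3, aeval (crPoly k) (crInvPoly k j) = c * X j) ∧
    (∃ c' : MvPolynomial (Fin 3) k, c' ≠ 0 ∧
      ∀ j : Fin 3, aeval (crInvPoly k) (crPoly k j) = c' * X j) :=
  cremona_quadratic_inverse_general k
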